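/- Let q ≥ 2, let n and d be positive integers with 0 < w < n, let C ⊆ (ZMod q)^n be a code in which any two distinct elements are at Hamming distance at least d, and let u ∈ (ZMod q)^n. Set N = |(u + C) ∩ (J^n(w-1) ∪ J^n(w))|. Then there exists a set D ⊆ (ZMod 2)^{n+1} of binary words of length n+1, each of Hamming weight exactly w, such that any two distinct elements of D are at Hamming distance at least 2·⌊(d+1)/2⌋ and |D| = N. -/

import Mathlib

/-
Reduce the 0/1-words of `u + C` lying in `J^n(w-1) ∪ J^n(w)` to binary words (this preserves
Hamming distances, and distances in `u + C` are those in `C`), then append one bit that brings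
every weight up to exactly `w`. The lifted words are distinct and at distance at least `d`; having
equal weight, they are at even distance, hence at distance at least `d` rounded up to an even number.
-/

/-- The binary Johnson space `J^n(w)` viewed inside `(ZMod q)^n`: words all of
whose coordinates are `0` or `1` and which have exactly `w` coordinates equal
to `1`. -/
def johnsonSpace (q n w : ℕ) : Set (Fin n → ZMod q) :=
  {v | (∀ i, v i = 0 ∨ v i = 1) ∧ (Finset.univ.filter fun i => v i = 1).card = w}

open Finset

section Hamming

variable {ι : Type*} [Fintype ι]

theorem hammingDist_comp_of_injOn {α β : Type*} [DecidableEq α] [DecidableEq β]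
    {f : α → β} {T : Set α} (hf : Set.InjOn f T) {x y : ι → α}
    (hx : ∀ i, x i ∈ T) (hy : ∀ i, y i ∈ T) :
    hammingDist (f ∘ x) (f ∘ y) = hammingDist x y := by
  simp only [hammingDist, Function.comp_apply, (hf.ne_iff (hx _) (hy _))]

theorem hammingNorm_comp_of_injOn {α β : Type*} [DecidableEq α] [DecidableEq β]
    [Zero α] [Zero β] {f : α → β} {T : Set α} (hf : Set.InjOn f T) (hT : 0 ∈ T)
    (hf₀ : f 0 = 0) {x : ι → α} (hx : ∀ i, x i ∈ T) :
    hammingNorm (f ∘ x) = hammingNorm x := by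
  rw [← hammingDist_zero_right, ← hammingDist_zero_right]
  convert hammingDist_comp_of_injOn hf hx (y := 0) fun _ => hT
  ext
  exact hf₀.symm

theorem hammingDist_add_left {β : Type*} [AddGroup β] [DecidableEq β] (u x y : ι → β) :
    hammingDist (u + x) (u + y) = hammingDist x y :=
  hammingDist_comp (fun i => (u i + ·)) fun i => add_right_injective (u i)

theorem ZMod.natCast_hammingNorm (x : ι → ZMod 2) : (hammingNorm x : ZMod 2) = ∑ i, x i := by
  have hx : ∀ i, x i ≠ 0 → x i = 1 := fun i => by generalize x i = a; decide +revert
  rw [hammingNorm, ← sum_filter_ne_zero, card_eq_sum_ones, Nat.cast_sum]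
  exact sum_congr rfl fun i hi => by rw [hx i (mem_filter.1 hi).2, Nat.cast_one]

theorem even_hammingDist_of_hammingNorm_eq {x y : ι → ZMod 2}
    (h : hammingNorm x = hammingNorm y) : Even (hammingDist x y) := by
  rw [← ZMod.natCast_eq_zero_iff_even, hammingDist_eq_hammingNorm, ZMod.natCast_hammingNorm]
  simp only [Pi.add_apply, Pi.neg_apply, sum_add_distrib, sum_neg_distrib,
    ← ZMod.natCast_hammingNorm, h, neg_add_cancel]

end Hamming

section Snoc

variable {β : Type*} {n : ℕ}

theorem hammingDist_snoc [DecidableEq β] (x y : Fin n → β) (a b : β) :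
    hammingDist (Fin.snoc x a : Fin (n + 1) → β) (Fin.snoc y b) =
      hammingDist x y + if a = b then 0 else 1 := by
  simp only [hammingDist, card_filter, Fin.sum_univ_castSucc, Fin.snoc_castSucc, Fin.snoc_last]
  by_cases h : a = b <;> simp [h]

theorem hammingNorm_snoc [Zero β] [DecidableEq β] (x : Fin n → β) (a : β) :
    hammingNorm (Fin.snoc x a : Fin (n + 1) → β) = hammingNorm x + if a = 0 then 0 else 1 := by
  simp only [hammingNorm, card_filter, Fin.sum_univ_castSucc, Fin.snoc_castSucc, Fin.snoc_last]
  by_cases h : a = 0 <;> simp [h]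

theorem hammingDist_le_hammingDist_snoc [DecidableEq β] (x y : Fin n → β) (a b : β) :
    hammingDist x y ≤ hammingDist (Fin.snoc x a : Fin (n + 1) → β) (Fin.snoc y b) := by
  rw [hammingDist_snoc]
  exact Nat.le_add_right _ _

end Snoc

theorem Nat.two_mul_add_one_div_two_le_of_even {d m : ℕ} (hm : Even m) (hdm : d ≤ m) :
    2 * ((d + 1) / 2) ≤ m := by
  obtain ⟨k, rfl⟩ := hm
  omega

section WeightCompletion

variable {n w : ℕ}

def weightCompletion (w : ℕ) (x : Fin n → ZMod 2) : Fin (n + 1) → ZMod 2 :=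
  Fin.snoc x (if hammingNorm x = w then 0 else 1)

theorem hammingNorm_weightCompletion {x : Fin n → ZMod 2}
    (hx : hammingNorm x = w - 1 ∨ hammingNorm x = w) : hammingNorm (weightCompletion w x) = w := by
  rw [weightCompletion, hammingNorm_snoc]
  by_cases h : hammingNorm x = w
  · simp [h]
  · simp only [h, if_false, one_ne_zero]
    omega

end WeightCompletion

theorem mem_zero_one_of_mem_johnsonSpace_union {q n w w' : ℕ} {v : Fin n → ZMod q}
    (hv : v ∈ johnsonSpace q n w ∪ johnsonSpace q n w') (i : Fin n) :
    v i ∈ ({0, 1} : Set (ZMod q)) := by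
  rcases hv with hv | hv
  exacts [hv.1 i, hv.1 i]

def binaryReduction (q : ℕ) (a : ZMod q) : ZMod 2 := if a = 1 then 1 else 0

def johnsonLift (q w : ℕ) {n : ℕ} (v : Fin n → ZMod q) : Fin (n + 1) → ZMod 2 :=
  weightCompletion w (binaryReduction q ∘ v)

section Lift

variable {q n w : ℕ} [Fact (1 < q)]

theorem binaryReduction_injOn : Set.InjOn (binaryReduction q) {0, 1} := by
  have h01 : (0 : ZMod q) ≠ 1 := zero_ne_one
  rintro a (rfl | rfl) b (rfl | rfl) h <;> simp_all [binaryReduction]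

theorem mem_johnsonSpace_iff {v : Fin n → ZMod q} :
    v ∈ johnsonSpace q n w ↔ (∀ i, v i ∈ ({0, 1} : Set (ZMod q))) ∧ hammingNorm v = w := by
  refine and_congr_right fun hv => ?_
  rw [hammingNorm]
  congr! 3 with i
  rcases hv i with h | h <;> simp [h]

theorem hammingNorm_johnsonLift {v : Fin n → ZMod q}
    (hv : v ∈ johnsonSpace q n (w - 1) ∪ johnsonSpace q n w) :
    hammingNorm (johnsonLift q w v) = w := by
  apply hammingNorm_weightCompletion
  rw [hammingNorm_comp_of_injOn binaryReduction_injOn (by simp) (by simp [binaryReduction])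
    (mem_zero_one_of_mem_johnsonSpace_union hv)]
  rcases hv with hv | hv
  exacts [.inl (mem_johnsonSpace_iff.1 hv).2, .inr (mem_johnsonSpace_iff.1 hv).2]

theorem hammingDist_le_hammingDist_johnsonLift {v v' : Fin n → ZMod q}
    (hv : v ∈ johnsonSpace q n (w - 1) ∪ johnsonSpace q n w)
    (hv' : v' ∈ johnsonSpace q n (w - 1) ∪ johnsonSpace q n w) :
    hammingDist v v' ≤ hammingDist (johnsonLift q w v) (johnsonLift q w v') := by
  rw [← hammingDist_comp_of_injOn binaryReduction_injOn
    (mem_zero_one_of_mem_johnsonSpace_union hv) (mem_zero_one_of_mem_johnsonSpace_union hv')]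
  exact hammingDist_le_hammingDist_snoc _ _ _ _

theorem johnsonLift_injOn :
    Set.InjOn (johnsonLift q w) (johnsonSpace q n (w - 1) ∪ johnsonSpace q n w) := by
  intro v hv v' hv' h
  have := hammingDist_le_hammingDist_johnsonLift hv hv'
  rwa [h, hammingDist_self, Nat.le_zero, hammingDist_eq_zero] at this

end Lift

theorem stmt_7_general (q n d w : ℕ) (hq : 2 ≤ q)
    (C : Set (Fin n → ZMod q))
    (hC : ∀ x ∈ C, ∀ y ∈ C, x ≠ y → d ≤ hammingDist x y)
    (u : Fin n → ZMod q) (N : ℕ)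
    (hN : N = (((fun c => u + c) '' C) ∩
        (johnsonSpace q n (w - 1) ∪ johnsonSpace q n w)).ncard) :
    ∃ D : Set (Fin (n + 1) → ZMod 2),
      (∀ x ∈ D, hammingNorm x = w) ∧
      (∀ x ∈ D, ∀ y ∈ D, x ≠ y → 2 * ((d + 1) / 2) ≤ hammingDist x y) ∧
      D.ncard = N := by
  have : Fact (1 < q) := ⟨hq⟩
  set S := ((fun c => u + c) '' C) ∩ (johnsonSpace q n (w - 1) ∪ johnsonSpace q n w)
  refine ⟨johnsonLift q w '' S, ?_, ?_, ?_⟩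
  · rintro _ ⟨v, hv, rfl⟩
    exact hammingNorm_johnsonLift hv.2
  · rintro _ ⟨_, ⟨⟨c, hc, rfl⟩, hv⟩, rfl⟩ _ ⟨_, ⟨⟨c', hc', rfl⟩, hv'⟩, rfl⟩ hne
    have hcc' : c ≠ c' := by rintro rfl; exact hne rfl
    apply Nat.two_mul_add_one_div_two_le_of_even
    · exact even_hammingDist_of_hammingNorm_eq
        (by rw [hammingNorm_johnsonLift hv, hammingNorm_johnsonLift hv'])
    · calc d ≤ hammingDist c c' := hC c hc c' hc' hcc'
        _ = hammingDist (u + c) (u + c') := (hammingDist_add_left u c c').symm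
        _ ≤ _ := hammingDist_le_hammingDist_johnsonLift hv hv'
  · rw [hN, (johnsonLift_injOn.mono Set.inter_subset_right).ncard_image]

/-- Theorem 2.3(i): from a code `C ⊆ (ZMod q)^n` of minimum distance at least
`d` and any `u`, setting `N = |(u + C) ∩ (J^n(w-1) ∪ J^n(w))|`, one obtains a
binary code `D ⊆ (ZMod 2)^{n+1}` of constant weight `w`, minimum distance at
least `2⌊(d+1)/2⌋`, and size `N`. -/
theorem stmt_7 (q n d w : ℕ) (hq : 2 ≤ q) (hn : 0 < n) (hd : 0 < d)
    (hw : 0 < w) (hwn : w < n)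
    (C : Set (Fin n → ZMod q))
    (hC : ∀ x ∈ C, ∀ y ∈ C, x ≠ y → d ≤ hammingDist x y)
    (u : Fin n → ZMod q) (N : ℕ)
    (hN : N = (((fun c => u + c) '' C) ∩
        (johnsonSpace q n (w - 1) ∪ johnsonSpace q n w)).ncard) :
    ∃ D : Set (Fin (n + 1) → ZMod 2),
      (∀ x ∈ D, hammingNorm x = w) ∧
      (∀ x ∈ D, ∀ y ∈ D, x ≠ y → 2 * ((d + 1) / 2) ≤ hammingDist x y) ∧
      D.ncard = N :=
  stmt_7_general q n d w hq C hC u N hN
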